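/- Let G be a connected simple graph on n vertices with Wiener index W and diameter d satisfying 2 ≤ d ≤ n−2. Let u_0, u_1, …, u_d be vertices forming a diameter path, i.e. d_G(u_i,u_j) = |i−j| for all 0 ≤ i,j ≤ d. Set s = Σ_{i=0}^d Tr_G(u_i), a = 12(1+d)(s − W) − nd(d+1)(d+2) − 3ns, and b = 4d(d+1)(d+2)W + 12s(W−s). Then S_𝒬(G) ≥ √(a² − 12b(d+1)(n−1−d)) / (3(d+1)(n−1−d)). -/

import Mathlib

open Finset Matrix

noncomputable def distMatrix {V : Type*} [Fintype V] (G : SimpleGraph V) : Matrix V V ℝ :=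
  Matrix.of fun u v => (G.dist u v : ℝ)

theorem distMatrix_isHermitian {V : Type*} [Fintype V] (G : SimpleGraph V) :
    (distMatrix G).IsHermitian := by
  show (distMatrix G)ᴴ = distMatrix G
  ext i j
  simp [distMatrix, Matrix.conjTranspose_apply, SimpleGraph.dist_comm]

noncomputable def transmission {V : Type*} [Fintype V] (G : SimpleGraph V) (v : V) : ℝ :=
  ∑ u, (G.dist v u : ℝ)

noncomputable def distSLMatrix {V : Type*} [Fintype V] [DecidableEq V] (G : SimpleGraph V) :
    Matrix V V ℝ :=
  Matrix.diagonal (transmission G) + distMatrix G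

theorem distSLMatrix_isHermitian {V : Type*} [Fintype V] [DecidableEq V] (G : SimpleGraph V) :
    (distSLMatrix G).IsHermitian :=
  (Matrix.isHermitian_diagonal _).add (distMatrix_isHermitian G)

noncomputable def maxEig {V : Type*} [Fintype V] [DecidableEq V] {A : Matrix V V ℝ}
    (hA : A.IsHermitian) : ℝ :=
  ⨆ i, hA.eigenvalues i

noncomputable def minEig {V : Type*} [Fintype V] [DecidableEq V] {A : Matrix V V ℝ}
    (hA : A.IsHermitian) : ℝ :=
  ⨅ i, hA.eigenvalues i

noncomputable def distSpread {V : Type*} [Fintype V] [DecidableEq V] (G : SimpleGraph V) : ℝ :=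
  maxEig (distMatrix_isHermitian G) - minEig (distMatrix_isHermitian G)

noncomputable def distSLSpread {V : Type*} [Fintype V] [DecidableEq V] (G : SimpleGraph V) : ℝ :=
  maxEig (distSLMatrix_isHermitian G) - minEig (distSLMatrix_isHermitian G)

/-!
The distance signless Laplacian `Q` is real symmetric, so for orthonormal `e₁, e₂` its spread is at
least the eigenvalue gap `√((p - q)² + 4r²)` of the compression `!![p, r; r, q]` of `Q` to
`span {e₁, e₂}`: compare the Rayleigh quotients of a suitably rotated orthonormal pair. Take for
`e₁, e₂` the normalised indicator vectors of the vertex set `S` of the diameter path and of its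
complement. Since the row sums of `Q` are `2 Tr(v)`, all block sums of `Q` are determined by
`∑_{v ∈ S} Tr(v) = s`, `W`, and the distances along the path, `∑_{i,j ≤ d} |i - j| = d(d+1)(d+2)/3`;
the gap of the compression then is exactly the stated bound.
-/

section

variable {V : Type*} [Fintype V] [DecidableEq V]

lemma indicator_dotProduct_indicator (S T : Finset V) :
    (fun v => if v ∈ S then (1 : ℝ) else 0) ⬝ᵥ (fun v => if v ∈ T then 1 else 0) = #(S ∩ T) := by
  simp [dotProduct, ← ite_and, ← Finset.mem_inter, Finset.inter_comm]

lemma indicator_dotProduct_mulVec_indicator (A : Matrix V V ℝ) (S T : Finset V) :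
    (fun v => if v ∈ S then (1 : ℝ) else 0) ⬝ᵥ (A *ᵥ fun v => if v ∈ T then 1 else 0) =
      ∑ v ∈ S, ∑ w ∈ T, A v w := by
  simp [dotProduct, mulVec, Finset.sum_ite_mem]

lemma sum_sum_compl_eq_sub (A : Matrix V V ℝ) (S : Finset V) :
    ∑ v ∈ S, ∑ w ∈ Sᶜ, A v w = ∑ v ∈ S, ∑ w, A v w - ∑ v ∈ S, ∑ w ∈ S, A v w := by
  rw [eq_sub_iff_add_eq, ← Finset.sum_add_distrib]
  exact Finset.sum_congr rfl fun v _ => by rw [add_comm, Finset.sum_add_sum_compl]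

end

namespace Matrix.IsHermitian

lemma dotProduct_mulVec_comm {V : Type*} [Fintype V] {A : Matrix V V ℝ} (hA : A.IsHermitian)
    (x y : V → ℝ) : x ⬝ᵥ (A *ᵥ y) = y ⬝ᵥ (A *ᵥ x) := by
  rw [dotProduct_mulVec, ← mulVec_transpose, isHermitian_iff_isSymm.mp hA, dotProduct_comm]

lemma sum_compl_sum_compl {V : Type*} [Fintype V] [DecidableEq V] {A : Matrix V V ℝ}
    (hA : A.IsHermitian) (S : Finset V) :
    ∑ v ∈ Sᶜ, ∑ w ∈ Sᶜ, A v w =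
      ∑ v, ∑ w, A v w - 2 * ∑ v ∈ S, ∑ w, A v w + ∑ v ∈ S, ∑ w ∈ S, A v w := by
  have hcross : ∑ v ∈ Sᶜ, ∑ w ∈ S, A v w = ∑ v ∈ S, ∑ w ∈ Sᶜ, A v w := by
    rw [Finset.sum_comm (f := fun v w => A v w)]
    exact Finset.sum_congr rfl fun v _ => Finset.sum_congr rfl fun w _ => by
      simpa using hA.apply v w
  have hrows := Finset.sum_compl_add_sum S fun v => ∑ w, A v w
  have h := sum_sum_compl_eq_sub A Sᶜ
  rw [compl_compl, hcross, sum_sum_compl_eq_sub] at h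
  linarith

variable {V : Type*} [Fintype V] [DecidableEq V] {A : Matrix V V ℝ} (hA : A.IsHermitian)

lemma exists_dotProduct_mulVec_eq_sum_eigenvalues (z : V → ℝ) :
    ∃ w : V → ℝ, z ⬝ᵥ (A *ᵥ z) = ∑ j, hA.eigenvalues j * w j ^ 2 ∧
      z ⬝ᵥ z = ∑ j, w j ^ 2 := by
  set U : Matrix V V ℝ := (hA.eigenvectorUnitary : Matrix V V ℝ)
  have hUt : star U = Uᵀ := by ext i j; simp [Matrix.star_apply]
  have hUU : U * star U = 1 := Matrix.mem_unitaryGroup_iff.mp hA.eigenvectorUnitary.2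
  refine ⟨star U *ᵥ z, ?_, ?_⟩
  · conv_lhs => rw [hA.spectral_theorem, Unitary.conjStarAlgAut_apply]
    rw [← mulVec_mulVec, ← mulVec_mulVec, dotProduct_mulVec z U, ← mulVec_transpose, ← hUt]
    simp only [dotProduct, mulVec_diagonal, Function.comp_apply, RCLike.ofReal_real_eq_id, id]
    exact Finset.sum_congr rfl fun j _ => by ring
  · rw [show ∑ j, (star U *ᵥ z) j ^ 2 = (star U *ᵥ z) ⬝ᵥ (star U *ᵥ z) by
      simp [dotProduct, sq], dotProduct_mulVec, ← mulVec_transpose, hUt, transpose_transpose,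
      mulVec_mulVec, ← hUt, hUU, one_mulVec, dotProduct_comm]

lemma minEig_mul_le_dotProduct_mulVec (z : V → ℝ) : minEig hA * (z ⬝ᵥ z) ≤ z ⬝ᵥ (A *ᵥ z) := by
  obtain ⟨w, hAz, hz⟩ := hA.exists_dotProduct_mulVec_eq_sum_eigenvalues z
  rw [hAz, hz, Finset.mul_sum]
  exact Finset.sum_le_sum fun j _ => mul_le_mul_of_nonneg_right
    (ciInf_le (Set.finite_range _).bddBelow j) (sq_nonneg _)

lemma dotProduct_mulVec_le_maxEig_mul (z : V → ℝ) : z ⬝ᵥ (A *ᵥ z) ≤ maxEig hA * (z ⬝ᵥ z) := by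
  obtain ⟨w, hAz, hz⟩ := hA.exists_dotProduct_mulVec_eq_sum_eigenvalues z
  rw [hAz, hz, Finset.mul_sum]
  exact Finset.sum_le_sum fun j _ => mul_le_mul_of_nonneg_right
    (le_ciSup (Set.finite_range _).bddAbove j) (sq_nonneg _)

lemma sqrt_le_maxEig_sub_minEig {e₁ e₂ : V → ℝ} (h₁ : e₁ ⬝ᵥ e₁ = 1) (h₂ : e₂ ⬝ᵥ e₂ = 1)
    (h₁₂ : e₁ ⬝ᵥ e₂ = 0) :
    √((e₁ ⬝ᵥ (A *ᵥ e₁) - e₂ ⬝ᵥ (A *ᵥ e₂)) ^ 2 + 4 * (e₁ ⬝ᵥ (A *ᵥ e₂)) ^ 2) ≤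
      maxEig hA - minEig hA := by
  set p := e₁ ⬝ᵥ (A *ᵥ e₁)
  set q := e₂ ⬝ᵥ (A *ᵥ e₂)
  set r := e₁ ⬝ᵥ (A *ᵥ e₂)
  have h₂₁ : e₂ ⬝ᵥ e₁ = 0 := by rwa [dotProduct_comm]
  have hr : e₂ ⬝ᵥ (A *ᵥ e₁) = r := hA.dotProduct_mulVec_comm _ _
  -- Rayleigh quotients of the pair `(e₁, e₂)` rotated by `θ`, with `(x, y) ∝ (cos θ, sin θ)`
  have hrot : ∀ x y : ℝ, (x ^ 2 - y ^ 2) * (p - q) + 2 * (2 * x * y) * r ≤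
      (maxEig hA - minEig hA) * (x ^ 2 + y ^ 2) := by
    intro x y
    have hz := hA.dotProduct_mulVec_le_maxEig_mul (x • e₁ + y • e₂)
    have hz' := hA.minEig_mul_le_dotProduct_mulVec ((-y) • e₁ + x • e₂)
    simp only [mulVec_add, mulVec_smul, add_dotProduct, dotProduct_add, smul_dotProduct,
      dotProduct_smul, smul_eq_mul, h₁, h₂, h₁₂, h₂₁, hr] at hz hz'
    nlinarith
  -- the angle `2θ` is the argument of `(p - q) + 2 r i`
  obtain ⟨w, hw⟩ := IsAlgClosed.exists_pow_nat_eq (⟨p - q, 2 * r⟩ : ℂ) two_pos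
  have hre : w.re ^ 2 - w.im ^ 2 = p - q := by
    have := congrArg Complex.re hw; simp only [sq, Complex.mul_re] at this; linarith
  have him : 2 * w.re * w.im = 2 * r := by
    have := congrArg Complex.im hw; simp only [sq, Complex.mul_im] at this; linarith
  have hnorm : w.re ^ 2 + w.im ^ 2 = √((p - q) ^ 2 + 4 * r ^ 2) := by
    rw [← hre, show 4 * r ^ 2 = (2 * w.re * w.im) ^ 2 by rw [him]; ring,
      show (w.re ^ 2 - w.im ^ 2) ^ 2 + (2 * w.re * w.im) ^ 2 = (w.re ^ 2 + w.im ^ 2) ^ 2 by ring,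
      Real.sqrt_sq (by positivity)]
  have key := hrot w.re w.im
  rw [hre, him, hnorm] at key
  have hspread : 0 ≤ maxEig hA - minEig hA := by
    have := (hA.minEig_mul_le_dotProduct_mulVec e₁).trans (hA.dotProduct_mulVec_le_maxEig_mul e₁)
    rw [h₁] at this; linarith
  set R := √((p - q) ^ 2 + 4 * r ^ 2)
  have hR : R ^ 2 = (p - q) ^ 2 + 4 * r ^ 2 := Real.sq_sqrt (by positivity)
  nlinarith [Real.sqrt_nonneg ((p - q) ^ 2 + 4 * r ^ 2)]

lemma sqrt_le_maxEig_sub_minEig_of_finset (S : Finset V) (hS : S.Nonempty)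
    (hSc : Sᶜ.Nonempty) :
    √(((∑ v ∈ S, ∑ w ∈ S, A v w) / #S - (∑ v ∈ Sᶜ, ∑ w ∈ Sᶜ, A v w) / #Sᶜ) ^ 2 +
        4 * (∑ v ∈ S, ∑ w ∈ Sᶜ, A v w) ^ 2 / (#S * #Sᶜ)) ≤ maxEig hA - minEig hA := by
  have hk : (0 : ℝ) < #S := by exact_mod_cast hS.card_pos
  have hm : (0 : ℝ) < #Sᶜ := by exact_mod_cast hSc.card_pos
  set e₁ : V → ℝ := (√(#S : ℝ))⁻¹ • fun v => if v ∈ S then 1 else 0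
  set e₂ : V → ℝ := (√(#Sᶜ : ℝ))⁻¹ • fun v => if v ∈ Sᶜ then 1 else 0
  have hinv : ∀ {x : ℝ}, 0 < x → (√x)⁻¹ * (√x)⁻¹ = x⁻¹ := fun hx => by
    rw [← mul_inv, Real.mul_self_sqrt hx.le]
  have h := hA.sqrt_le_maxEig_sub_minEig (e₁ := e₁) (e₂ := e₂)
    (by simp only [e₁, smul_dotProduct, dotProduct_smul, indicator_dotProduct_indicator,
      Finset.inter_self, smul_eq_mul, ← mul_assoc, hinv hk]; field_simp)
    (by simp only [e₂, smul_dotProduct, dotProduct_smul, indicator_dotProduct_indicator,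
      Finset.inter_self, smul_eq_mul, ← mul_assoc, hinv hm]; field_simp)
    (by simp only [e₁, e₂, smul_dotProduct, dotProduct_smul, indicator_dotProduct_indicator,
      Finset.inter_compl, Finset.card_empty, Nat.cast_zero, smul_zero])
  convert h using 3
  · simp only [e₁, e₂, mulVec_smul, smul_dotProduct, dotProduct_smul, smul_eq_mul,
      indicator_dotProduct_mulVec_indicator, ← mul_assoc, hinv hk, hinv hm]
    ring
  · simp only [e₁, e₂, mulVec_smul, smul_dotProduct, dotProduct_smul, smul_eq_mul,
      indicator_dotProduct_mulVec_indicator, mul_pow, inv_pow, Real.sq_sqrt hk.le,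
      Real.sq_sqrt hm.le]
    field_simp

end Matrix.IsHermitian

lemma sum_range_natCast_sub (k : ℕ) : ∑ j ∈ Finset.range k, ((k : ℝ) - j) = k * (k + 1) / 2 := by
  induction k with
  | zero => simp
  | succ k ih =>
    rw [Finset.sum_range_succ]
    push_cast
    simp only [add_sub_right_comm _ (1 : ℝ), Finset.sum_add_distrib, ih, Finset.sum_const,
      Finset.card_range, nsmul_eq_mul]
    ring

lemma sum_range_sum_range_abs_sub (k : ℕ) :
    ∑ i ∈ Finset.range k, ∑ j ∈ Finset.range k, |(i : ℝ) - j| = (k - 1) * k * (k + 1) / 3 := by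
  induction k with
  | zero => simp
  | succ k ih =>
    have hlt : ∀ j ∈ Finset.range k, |(k : ℝ) - j| = k - j := fun j hj =>
      abs_of_pos (sub_pos.mpr (by exact_mod_cast Finset.mem_range.mp hj))
    simp only [Finset.sum_range_succ, Finset.sum_add_distrib, ih, sub_self, abs_zero, add_zero]
    rw [Finset.sum_congr rfl fun (i : ℕ) hi => (abs_sub_comm (i : ℝ) k).trans (hlt i hi),
      Finset.sum_congr rfl hlt, sum_range_natCast_sub]
    push_cast
    ring

namespace SimpleGraph

variable {V : Type*} (G : SimpleGraph V)

lemma sum_distSLMatrix_apply [Fintype V] [DecidableEq V] (v : V) :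
    ∑ w, distSLMatrix G v w = 2 * transmission G v := by
  simp [distSLMatrix, distMatrix, Matrix.diagonal_apply, Finset.sum_add_distrib, transmission,
    two_mul]

lemma sum_sum_distSLMatrix [Fintype V] [DecidableEq V] (S : Finset V) :
    ∑ v ∈ S, ∑ w ∈ S, distSLMatrix G v w =
      ∑ v ∈ S, transmission G v + ∑ v ∈ S, ∑ w ∈ S, (G.dist v w : ℝ) := by
  rw [← Finset.sum_add_distrib]
  refine Finset.sum_congr rfl fun v hv => ?_
  simp [distSLMatrix, distMatrix, Matrix.diagonal_apply, Finset.sum_add_distrib, hv]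

variable {G} {d : ℕ} {u : Fin (d + 1) → V}

lemma injective_of_dist_eq_abs_sub
    (hu : ∀ i j : Fin (d + 1), (G.dist (u i) (u j) : ℤ) = |((i : ℕ) : ℤ) - ((j : ℕ) : ℤ)|) :
    Function.Injective u := fun i j hij => by
  have h := hu i j
  rw [hij, dist_self, Nat.cast_zero, eq_comm, abs_eq_zero, sub_eq_zero] at h
  exact Fin.ext (by exact_mod_cast h)

lemma sum_sum_dist_image_of_dist_eq_abs_sub [Fintype V] [DecidableEq V]
    (hu : ∀ i j : Fin (d + 1), (G.dist (u i) (u j) : ℤ) = |((i : ℕ) : ℤ) - ((j : ℕ) : ℤ)|) :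
    ∑ v ∈ Finset.univ.image u, ∑ w ∈ Finset.univ.image u, (G.dist v w : ℝ) =
      d * (d + 1) * (d + 2) / 3 := by
  have hinj := injective_of_dist_eq_abs_sub hu
  have hdist : ∀ i j, (G.dist (u i) (u j) : ℝ) = |((i : ℕ) : ℝ) - (j : ℕ)| := fun i j => by
    exact_mod_cast hu i j
  rw [Finset.sum_image fun x _ y _ h => hinj h]
  simp_rw [Finset.sum_image fun x _ y _ h => hinj h, hdist]
  rw [Fin.sum_univ_eq_sum_range (fun i => ∑ j : Fin (d + 1), |(i : ℝ) - (j : ℕ)|),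
    Finset.sum_congr rfl fun (i : ℕ) _ => Fin.sum_univ_eq_sum_range (fun j => |(i : ℝ) - j|) _,
    sum_range_sum_range_abs_sub]
  push_cast
  ring

end SimpleGraph

theorem stmt16_general {V : Type*} [Fintype V] [DecidableEq V] (G : SimpleGraph V)
    (n : ℕ) (hn : n = Fintype.card V)
    (W : ℝ) (hW : W = (∑ u, transmission G u) / 2)
    (d : ℕ) (hdn : d + 2 ≤ n)
    (u : Fin (d + 1) → V)
    (hu : ∀ i j : Fin (d + 1), (G.dist (u i) (u j) : ℤ) = |((i : ℕ) : ℤ) - ((j : ℕ) : ℤ)|)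
    (s a b : ℝ)
    (hs : s = ∑ i, transmission G (u i))
    (ha : a = 12*(1 + d)*(s - W) - n*d*(d + 1)*(d + 2) - 3*n*s)
    (hb : b = 4*d*(d + 1)*(d + 2)*W + 12*s*(W - s)) :
    Real.sqrt (a^2 - 12*b*(d + 1)*(n - 1 - d)) / (3*(d + 1)*((n : ℝ) - 1 - d)) ≤
      distSLSpread G := by
  have hinj := G.injective_of_dist_eq_abs_sub hu
  set S := Finset.univ.image u
  have hS : #S = d + 1 := by simp [S, Finset.card_image_of_injective _ hinj]
  have hSc : (#Sᶜ : ℝ) = n - 1 - d := by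
    rw [Finset.card_compl, hS, Nat.cast_sub (by omega), ← hn]; push_cast; ring
  have hTr : ∑ v ∈ S, transmission G v = s := by rw [Finset.sum_image fun x _ y _ h => hinj h, hs]
  have hSS : ∑ v ∈ S, ∑ w ∈ S, distSLMatrix G v w = s + d * (d + 1) * (d + 2) / 3 := by
    rw [G.sum_sum_distSLMatrix, hTr, G.sum_sum_dist_image_of_dist_eq_abs_sub hu]
  have hrows : ∑ v ∈ S, ∑ w, distSLMatrix G v w = 2 * s := by
    simp_rw [G.sum_distSLMatrix_apply, ← Finset.mul_sum, hTr]
  have htotal : ∑ v, ∑ w, distSLMatrix G v w = 4 * W := by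
    simp_rw [G.sum_distSLMatrix_apply, ← Finset.mul_sum, hW]; ring
  have h := (distSLMatrix_isHermitian G).sqrt_le_maxEig_sub_minEig_of_finset S
    (Finset.card_pos.mp (by omega)) (Finset.card_pos.mp (by rw [Finset.card_compl]; omega))
  rw [(distSLMatrix_isHermitian G).sum_compl_sum_compl, sum_sum_compl_eq_sub, hSS, hrows,
    htotal, hS, hSc, Nat.cast_add_one] at h
  refine le_of_eq_of_le ?_ h
  have hm : (0 : ℝ) < n - 1 - d := by
    linarith [show (d : ℝ) + 2 ≤ n by exact_mod_cast hdn]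
  rw [div_eq_iff (by positivity),
    ← Real.sqrt_sq (by positivity : (0 : ℝ) ≤ 3 * (d + 1) * (n - 1 - d)),
    ← Real.sqrt_mul' _ (sq_nonneg _)]
  congr 1
  rw [ha, hb]
  field_simp
  ring

theorem stmt16 {V : Type*} [Fintype V] [DecidableEq V] (G : SimpleGraph V)
    (hconn : G.Connected)
    (n : ℕ) (hn : n = Fintype.card V)
    (W : ℝ) (hW : W = (∑ u, transmission G u) / 2)
    (d : ℕ) (hd : G.diam = d) (hd2 : 2 ≤ d) (hdn : d + 2 ≤ n)
    (u : Fin (d + 1) → V)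
    (hu : ∀ i j : Fin (d + 1), (G.dist (u i) (u j) : ℤ) = |((i : ℕ) : ℤ) - ((j : ℕ) : ℤ)|)
    (s a b : ℝ)
    (hs : s = ∑ i, transmission G (u i))
    (ha : a = 12*(1 + d)*(s - W) - n*d*(d + 1)*(d + 2) - 3*n*s)
    (hb : b = 4*d*(d + 1)*(d + 2)*W + 12*s*(W - s)) :
    Real.sqrt (a^2 - 12*b*(d + 1)*(n - 1 - d)) / (3*(d + 1)*((n : ℝ) - 1 - d)) ≤
      distSLSpread G :=
  stmt16_general G n hn W hW d hdn u hu s a b hs ha hb
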